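/- Let f : ℝⁿ → ℝ be convex and continuously differentiable with minimizer X*, and let α, β, γ : (0,∞) → ℝ be C¹ with β̇ ≤ e^α and γ̇ = e^α. If X : (0,∞) → ℝⁿ solves Ẍ + (e^α − α̇)Ẋ + e^{2α+β}∇f(X) = 0 (the Euclidean Bregman Euler–Lagrange equation), then the energy E(t) = D_h(X* , X + e^{−α}Ẋ) + e^{β}(f(X) − f(X*)) with h(X) = ‖X‖²/2 is non-increasing along the solution, and consequently f(X(t)) − f(X*) ≤ E(t₀) e^{−β(t)} for t ≥ t₀. -/

import Mathlib

/-!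
Along a solution, `Z = X* − X − e^{−α}Ẋ` satisfies `Ż = e^{α+β} ∇f(X)` by the Euler–Lagrange
equation, so the energy has derivative `e^{α+β} ⟪∇f(X), X* − X⟫ + β̇ e^β (f(X) − f(X*))`.
Convexity bounds the inner product by `f(X*) − f(X) ≤ 0`, and then `β̇ ≤ e^α` makes the
derivative non-positive. The rate follows because the energy dominates `e^β (f(X) − f(X*))`.
-/

/-- The Lyapunov energy
`E(t) = ‖X* − X(t) − e^{−α(t)}Ẋ(t)‖²/2 + e^{β(t)}(f(X(t)) − f(X*))`
(the Euclidean Bregman energy, `h(X) = ‖X‖²/2`). -/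
noncomputable def energy {n : ℕ} (f : EuclideanSpace ℝ (Fin n) → ℝ)
    (Xstar : EuclideanSpace ℝ (Fin n)) (α β : ℝ → ℝ)
    (X X' : ℝ → EuclideanSpace ℝ (Fin n)) (t : ℝ) : ℝ :=
  ‖Xstar - X t - Real.exp (-α t) • X' t‖ ^ 2 / 2
    + Real.exp (β t) * (f (X t) - f Xstar)

open Real Set
open scoped RealInnerProductSpace

theorem ConvexOn.fderiv_apply_sub_le {E : Type*} [NormedAddCommGroup E] [NormedSpace ℝ E]
    {s : Set E} {f : E → ℝ} (hconv : ConvexOn ℝ s f) {x y : E} (hx : x ∈ s) (hy : y ∈ s)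
    (hf : DifferentiableAt ℝ f x) : fderiv ℝ f x (y - x) ≤ f y - f x := by
  set L : ℝ →ᵃ[ℝ] E := AffineMap.lineMap x y
  have hL0 : L 0 = x := AffineMap.lineMap_apply_zero x y
  have hL1 : L 1 = y := AffineMap.lineMap_apply_one x y
  have hderiv : HasDerivAt (f ∘ L) (fderiv ℝ f x (y - x)) 0 := by
    have hfL : HasFDerivAt f (fderiv ℝ f x) (L 0) := hL0 ▸ hf.hasFDerivAt
    exact hfL.comp_hasDerivAt 0 AffineMap.hasDerivAt_lineMap
  have := (hconv.comp_affineMap L).le_slope_of_hasDerivAt (by simpa [hL0] using hx)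
    (by simpa [hL1] using hy) one_pos hderiv
  simpa [slope_def_field, hL0, hL1] using this

theorem hasDerivAt_sub_sub_exp_neg_smul_of_eulerLagrange {E : Type*} [NormedAddCommGroup E]
    [NormedSpace ℝ E] {α β α' : ℝ → ℝ} {X X' X'' : ℝ → E} {x v : E} {t : ℝ}
    (hα : HasDerivAt α (α' t) t) (hX : HasDerivAt X (X' t) t) (hX' : HasDerivAt X' (X'' t) t)
    (hode : X'' t + (exp (α t) - α' t) • X' t + exp (2 * α t + β t) • v = 0) :
    HasDerivAt (fun s ↦ x - X s - exp (-α s) • X' s) (exp (α t + β t) • v) t := by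
  have hZ : HasDerivAt (fun s ↦ x - X s - exp (-α s) • X' s) _ t :=
    (hX.const_sub x).sub (hα.neg.exp.smul hX')
  convert hZ using 1
  have hX'' : X'' t = -((exp (α t) - α' t) • X' t) - exp (2 * α t + β t) • v := by
    rw [← sub_eq_zero, ← hode]; abel
  have h₁ : exp (-α t) * exp (2 * α t + β t) = exp (α t + β t) := by
    rw [← exp_add]; ring_nf
  have h₂ : exp (-α t) * exp (α t) = 1 := by rw [← exp_add]; simp
  simp only [hX'', Pi.neg_apply, smul_sub, smul_neg, smul_smul, mul_sub, h₁, h₂]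
  module

theorem hasDerivAt_energy {n : ℕ} {f : EuclideanSpace ℝ (Fin n) → ℝ}
    {Xstar : EuclideanSpace ℝ (Fin n)} {α β α' β' : ℝ → ℝ}
    {X X' X'' : ℝ → EuclideanSpace ℝ (Fin n)} {t : ℝ}
    (hf : DifferentiableAt ℝ f (X t)) (hα : HasDerivAt α (α' t) t)
    (hβ : HasDerivAt β (β' t) t) (hX : HasDerivAt X (X' t) t)
    (hX' : HasDerivAt X' (X'' t) t)
    (hode : X'' t + (exp (α t) - α' t) • X' t + exp (2 * α t + β t) • gradient f (X t) = 0) :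
    HasDerivAt (energy f Xstar α β X X')
      (exp (α t + β t) * ⟪gradient f (X t), Xstar - X t⟫
        + β' t * exp (β t) * (f (X t) - f Xstar)) t := by
  have hZ := (hasDerivAt_sub_sub_exp_neg_smul_of_eulerLagrange (x := Xstar) hα hX hX'
    hode).norm_sq.div_const 2
  have hfX := hβ.exp.mul ((hf.hasFDerivAt.comp_hasDerivAt t hX).sub_const (f Xstar))
  have hE : HasDerivAt (energy f Xstar α β X X') _ t := hZ.add hfX
  convert hE using 1
  have h : exp (α t + β t) * exp (-α t) = exp (β t) := by rw [← exp_add]; ring_nf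
  simp only [Function.comp_apply, ← inner_gradient_left, real_inner_smul_right,
    real_inner_smul_left, inner_sub_left]
  rw [real_inner_comm (Xstar - X t), real_inner_comm (X' t), inner_sub_left]
  linear_combination ⟪X' t, gradient f (X t)⟫ * h

theorem energy_deriv_nonpos {E : Type*} [NormedAddCommGroup E] [InnerProductSpace ℝ E]
    [CompleteSpace E] {s : Set E} {f : E → ℝ} (hconv : ConvexOn ℝ s f) {x xstar : E}
    (hx : x ∈ s) (hxstar : xstar ∈ s) (hf : DifferentiableAt ℝ f x) (hmin : f xstar ≤ f x)
    {a b b' : ℝ} (hb' : b' ≤ exp a) :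
    exp (a + b) * ⟪gradient f x, xstar - x⟫ + b' * exp b * (f x - f xstar) ≤ 0 := by
  have hgrad : ⟪gradient f x, xstar - x⟫ ≤ f xstar - f x := by
    rw [inner_gradient_left]
    exact hconv.fderiv_apply_sub_le hx hxstar hf
  calc exp (a + b) * ⟪gradient f x, xstar - x⟫ + b' * exp b * (f x - f xstar)
      ≤ exp (a + b) * (f xstar - f x) + exp a * exp b * (f x - f xstar) := by
        gcongr
    _ = 0 := by rw [exp_add]; ring

theorem sub_le_energy_mul_exp_neg {n : ℕ} (f : EuclideanSpace ℝ (Fin n) → ℝ)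
    (Xstar : EuclideanSpace ℝ (Fin n)) (α β : ℝ → ℝ) (X X' : ℝ → EuclideanSpace ℝ (Fin n))
    (t : ℝ) : f (X t) - f Xstar ≤ energy f Xstar α β X X' t * exp (-β t) := by
  have h : exp (β t) * exp (-β t) = 1 := by rw [← exp_add]; simp
  have hN : 0 ≤ ‖Xstar - X t - exp (-α t) • X' t‖ ^ 2 / 2 * exp (-β t) := by positivity
  unfold energy
  linear_combination hN - (f (X t) - f Xstar) * h

theorem stmt17_general (n : ℕ) (f : EuclideanSpace ℝ (Fin n) → ℝ)
    (hf : ContDiff ℝ 1 f) (hconv : ConvexOn ℝ Set.univ f)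
    (Xstar : EuclideanSpace ℝ (Fin n)) (hmin : ∀ y, f Xstar ≤ f y)
    (α β α' β' : ℝ → ℝ)
    (hα : ∀ t ∈ Set.Ioi (0 : ℝ), HasDerivAt α (α' t) t)
    (hβ : ∀ t ∈ Set.Ioi (0 : ℝ), HasDerivAt β (β' t) t)
    (hideal₁ : ∀ t ∈ Set.Ioi (0 : ℝ), β' t ≤ Real.exp (α t))
    (X X' X'' : ℝ → EuclideanSpace ℝ (Fin n))
    (hX : ∀ t ∈ Set.Ioi (0 : ℝ), HasDerivAt X (X' t) t)
    (hX' : ∀ t ∈ Set.Ioi (0 : ℝ), HasDerivAt X' (X'' t) t)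
    (hode : ∀ t ∈ Set.Ioi (0 : ℝ),
      X'' t + (Real.exp (α t) - α' t) • X' t
        + Real.exp (2 * α t + β t) • gradient f (X t) = 0) :
    (∀ s t : ℝ, 0 < s → s ≤ t →
      energy f Xstar α β X X' t ≤ energy f Xstar α β X X' s) ∧
    (∀ t₀ t : ℝ, 0 < t₀ → t₀ ≤ t →
      f (X t) - f Xstar ≤ energy f Xstar α β X X' t₀ * Real.exp (-β t)) := by
  have hfd : Differentiable ℝ f := hf.differentiable one_ne_zero
  set D : ℝ → ℝ := fun t ↦ exp (α t + β t) * ⟪gradient f (X t), Xstar - X t⟫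
    + β' t * exp (β t) * (f (X t) - f Xstar)
  have hderiv : ∀ t ∈ Ioi (0 : ℝ), HasDerivAt (energy f Xstar α β X X') (D t) t := fun t ht ↦
    hasDerivAt_energy (hfd _) (hα t ht) (hβ t ht) (hX t ht) (hX' t ht) (hode t ht)
  have hanti : AntitoneOn (energy f Xstar α β X X') (Ioi 0) := by
    refine antitoneOn_of_hasDerivWithinAt_nonpos (f' := D) (convex_Ioi 0)
      (fun t ht ↦ (hderiv t ht).continuousAt.continuousWithinAt) ?_ ?_ <;> rw [interior_Ioi]
    · exact fun t ht ↦ (hderiv t ht).hasDerivWithinAt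
    · exact fun t ht ↦ energy_deriv_nonpos hconv trivial trivial (hfd _) (hmin _) (hideal₁ t ht)
  refine ⟨fun s t hs hst ↦ hanti hs (hs.trans_le hst) hst, fun t₀ t ht₀ ht ↦ ?_⟩
  calc f (X t) - f Xstar ≤ energy f Xstar α β X X' t * exp (-β t) :=
        sub_le_energy_mul_exp_neg f Xstar α β X X' t
    _ ≤ energy f Xstar α β X X' t₀ * exp (-β t) := by
        gcongr
        exact hanti ht₀ (ht₀.trans_le ht) ht

/-- Let `f` be convex and continuously differentiable with minimizer `X*`, and let
`α, β, γ : (0,∞) → ℝ` be `C¹` with `β̇ ≤ e^α` and `γ̇ = e^α` (ideal scaling).  If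
`X` solves the Euclidean Bregman Euler–Lagrange equation
`Ẍ + (e^α − α̇)Ẋ + e^{2α+β}∇f(X) = 0`, then the energy `E` is non-increasing on
`(0,∞)`, and consequently `f(X(t)) − f(X*) ≤ E(t₀) e^{−β(t)}` for `t ≥ t₀ > 0`. -/
theorem stmt17 (n : ℕ) (f : EuclideanSpace ℝ (Fin n) → ℝ)
    (hf : ContDiff ℝ 1 f) (hconv : ConvexOn ℝ Set.univ f)
    (Xstar : EuclideanSpace ℝ (Fin n)) (hmin : ∀ y, f Xstar ≤ f y)
    (α β γ α' β' γ' : ℝ → ℝ)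
    (hα : ∀ t ∈ Set.Ioi (0 : ℝ), HasDerivAt α (α' t) t)
    (hβ : ∀ t ∈ Set.Ioi (0 : ℝ), HasDerivAt β (β' t) t)
    (hγ : ∀ t ∈ Set.Ioi (0 : ℝ), HasDerivAt γ (γ' t) t)
    (hα' : ContinuousOn α' (Set.Ioi 0))
    (hβ' : ContinuousOn β' (Set.Ioi 0))
    (hγ' : ContinuousOn γ' (Set.Ioi 0))
    (hideal₁ : ∀ t ∈ Set.Ioi (0 : ℝ), β' t ≤ Real.exp (α t))
    (hideal₂ : ∀ t ∈ Set.Ioi (0 : ℝ), γ' t = Real.exp (α t))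
    (X X' X'' : ℝ → EuclideanSpace ℝ (Fin n))
    (hX : ∀ t ∈ Set.Ioi (0 : ℝ), HasDerivAt X (X' t) t)
    (hX' : ∀ t ∈ Set.Ioi (0 : ℝ), HasDerivAt X' (X'' t) t)
    (hode : ∀ t ∈ Set.Ioi (0 : ℝ),
      X'' t + (Real.exp (α t) - α' t) • X' t
        + Real.exp (2 * α t + β t) • gradient f (X t) = 0) :
    (∀ s t : ℝ, 0 < s → s ≤ t →
      energy f Xstar α β X X' t ≤ energy f Xstar α β X X' s) ∧
    (∀ t₀ t : ℝ, 0 < t₀ → t₀ ≤ t →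
      f (X t) - f Xstar ≤ energy f Xstar α β X X' t₀ * Real.exp (-β t)) :=
  stmt17_general n f hf hconv Xstar hmin α β α' β' hα hβ hideal₁ X X' X'' hX hX' hode
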